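/- arXiv:1111.7284 — 3 statements merged into one kernel-verified Lean document; each statement's English description precedes it below -/
import Mathlib

section
/- If a Hoffman graph 𝔥 has a decomposition {𝔥^1, …, 𝔥^n} (with each 𝔥^i having at least one slim vertex), then λ_min(𝔥) = min{ λ_min(𝔥^i) : 1 ≤ i ≤ n }. -/
/-- A Hoffman graph: a finite simple graph whose vertices are labeled slim or fat,
such that fat vertices are pairwise non-adjacent and every fat vertex is adjacent
to at least one slim vertex. -/
structure HoffmanGraph (V : Type*) where
  adj : V → V → Prop
  symm : ∀ {x y : V}, adj x y → adj y x
  loopless : ∀ x : V, ¬ adj x x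
  fat : V → Prop
  fat_slim : ∀ x : V, fat x → ∃ y : V, adj x y ∧ ¬ fat y
  fat_nonadj : ∀ x y : V, fat x → fat y → ¬ adj x y

/-- The smallest eigenvalue of a real matrix (the infimum of its set of real
eigenvalues); for a real symmetric matrix on a nonempty finite index type this is
the least eigenvalue. -/
noncomputable def minEig {n : Type*} [Fintype n] (M : Matrix n n ℝ) : ℝ :=
  sInf {t : ℝ | ∃ v : n → ℝ, v ≠ 0 ∧ M.mulVec v = t • v}

namespace HoffmanGraph

variable {V : Type*}

/-- The type of slim vertices. -/
abbrev Slim (H : HoffmanGraph V) : Type _ := {x : V // ¬ H.fat x}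

/-- The type of fat vertices. -/
abbrev FatV (H : HoffmanGraph V) : Type _ := {x : V // H.fat x}

noncomputable instance (priority := 50) instFintypeSlim [Finite V] {H : HoffmanGraph V} :
    Fintype H.Slim := Fintype.ofFinite _

noncomputable instance (priority := 50) instFintypeFatV [Finite V] {H : HoffmanGraph V} :
    Fintype H.FatV := Fintype.ofFinite _

/-- The set of fat neighbors `N^f(x)` of a vertex. -/
def fatNbrs (H : HoffmanGraph V) (x : V) : Set V := {f | H.fat f ∧ H.adj x f}

/-- The set of common fat neighbors `N^f(x) ∩ N^f(y)` of two vertices. -/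
def commonFat (H : HoffmanGraph V) (x y : V) : Set V :=
  {f | H.fat f ∧ H.adj x f ∧ H.adj y f}

lemma commonFat_comm (H : HoffmanGraph V) (x y : V) :
    H.commonFat x y = H.commonFat y x := by
  ext f; simp only [commonFat, Set.mem_setOf_eq]; tauto

/-- The degree of a vertex. -/
noncomputable def degree (H : HoffmanGraph V) (x : V) : ℕ := {y | H.adj x y}.ncard

/-- The matrix `B(𝔥) = A_s - C Cᵀ`, written entrywise:
`B x y = A_s x y - |N^f(x) ∩ N^f(y)|`. -/
noncomputable def B (H : HoffmanGraph V) : Matrix H.Slim H.Slim ℝ := by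
  classical
  exact Matrix.of fun x y =>
    (if H.adj x.1 y.1 then (1 : ℝ) else 0) - ((H.commonFat x.1 y.1).ncard : ℝ)

/-- `λ_min(𝔥)`: the smallest eigenvalue of `B(𝔥)`. -/
noncomputable def lamMin [Finite V] (H : HoffmanGraph V) : ℝ := minEig H.B

/-- The adjacency matrix of the slim subgraph of `𝔥` (equivalently, the `B`-matrix
of the slim subgraph regarded as a slim Hoffman graph). -/
noncomputable def slimAdjMatrix (H : HoffmanGraph V) : Matrix H.Slim H.Slim ℝ := by
  classical
  exact Matrix.of fun x y => if H.adj x.1 y.1 then (1 : ℝ) else 0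

/-- A Hoffman graph is fat if every slim vertex has a fat neighbor. -/
def IsFat (H : HoffmanGraph V) : Prop :=
  ∀ x : V, ¬ H.fat x → ∃ f : V, H.fat f ∧ H.adj x f

end HoffmanGraph

/-- An embedding exhibiting `G` as an induced Hoffman subgraph of `H`:
an injection preserving adjacency, non-adjacency, and the slim/fat labeling. -/
structure HoffmanEmbedding {V W : Type*} (G : HoffmanGraph V) (H : HoffmanGraph W) where
  toFun : V → W
  inj : Function.Injective toFun
  adj_iff : ∀ x y : V, G.adj x y ↔ H.adj (toFun x) (toFun y)
  fat_iff : ∀ x : V, G.fat x ↔ H.fat (toFun x)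

/-- An isomorphism of Hoffman graphs. -/
structure HoffmanIso {V W : Type*} (G : HoffmanGraph V) (H : HoffmanGraph W) where
  toEquiv : V ≃ W
  adj_iff : ∀ x y : V, G.adj x y ↔ H.adj (toEquiv x) (toEquiv y)
  fat_iff : ∀ x : V, G.fat x ↔ H.fat (toEquiv x)

namespace HoffmanGraph

variable {V : Type*}

/-- The induced Hoffman subgraph on a set `W` of vertices, provided every fat
vertex of `W` keeps a slim neighbor inside `W`. -/
def induce (H : HoffmanGraph V) (W : Finset V)
    (hW : ∀ y ∈ W, H.fat y → ∃ x ∈ W, ¬ H.fat x ∧ H.adj y x) :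
    HoffmanGraph {v : V // v ∈ W} where
  adj x y := H.adj x.1 y.1
  symm := @fun x y h => H.symm h
  loopless x h := H.loopless x.1 h
  fat x := H.fat x.1
  fat_slim x hx := by
    obtain ⟨z, hzW, hz1, hz2⟩ := hW x.1 x.2 hx
    exact ⟨⟨z, hzW⟩, hz2, hz1⟩
  fat_nonadj x y hx hy := H.fat_nonadj x.1 y.1 hx hy

/-- A decomposition of a Hoffman graph `H` into the family of induced Hoffman
subgraphs on the (nonempty) vertex sets `W i`. -/
structure IsDecomposition (H : HoffmanGraph V) {ι : Type*} (W : ι → Finset V) : Prop where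
  nonempty : ∀ i, (W i).Nonempty
  cover : ∀ v : V, ∃ i, v ∈ W i
  slim_disj : ∀ i j, i ≠ j → ∀ x : V, ¬ H.fat x → x ∈ W i → x ∈ W j → False
  fat_closed : ∀ i, ∀ x y : V, x ∈ W i → ¬ H.fat x → H.fat y → H.adj x y → y ∈ W i
  part_fat : ∀ i, ∀ y ∈ W i, H.fat y → ∃ x ∈ W i, ¬ H.fat x ∧ H.adj y x
  cross : ∀ i j, i ≠ j → ∀ x y : V, x ∈ W i → y ∈ W j → ¬ H.fat x → ¬ H.fat y →
    (H.commonFat x y).ncard ≤ 1 ∧ ((H.commonFat x y).ncard = 1 ↔ H.adj x y)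

/-- A Hoffman graph is decomposable if it admits a decomposition into `n ≥ 2` parts. -/
def Decomposable (H : HoffmanGraph V) : Prop :=
  ∃ n : ℕ, 2 ≤ n ∧ ∃ W : Fin n → Finset V, H.IsDecomposition W

/-- `α`-reducibility: `λ_min(H) ≥ α` and there is a Hoffman graph `H'` containing `H`
as an induced Hoffman subgraph together with a decomposition `{𝔥¹, 𝔥²}` of `H'` whose
parts have smallest eigenvalue at least `α` and whose slim vertex sets both meet the
slim vertex set of `H`. -/
def AlphaReducible [Finite V] (H : HoffmanGraph V) (α : ℝ) : Prop :=
  H.lamMin ≥ α ∧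
  ∃ (V' : Type) (_ : Finite V') (H' : HoffmanGraph V') (e : HoffmanEmbedding H H')
    (W : Fin 2 → Finset V') (hD : H'.IsDecomposition W),
    (∀ i, (H'.induce (W i) (hD.part_fat i)).lamMin ≥ α) ∧
    (∀ i, ∃ v : V, ¬ H.fat v ∧ e.toFun v ∈ W i)

/-- `α`-irreducibility: `λ_min(H) ≥ α` and `H` is not `α`-reducible. -/
def AlphaIrreducible [Finite V] (H : HoffmanGraph V) (α : ℝ) : Prop :=
  H.lamMin ≥ α ∧ ¬ H.AlphaReducible α

end HoffmanGraph

/-- An edge-signed graph: a simple graph whose edge set is partitioned into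
`(+)`-edges and `(−)`-edges. -/
structure EdgeSignedGraph (V : Type*) where
  pos : V → V → Prop
  neg : V → V → Prop
  pos_symm : ∀ {x y : V}, pos x y → pos y x
  neg_symm : ∀ {x y : V}, neg x y → neg y x
  pos_irrefl : ∀ x : V, ¬ pos x x
  neg_irrefl : ∀ x : V, ¬ neg x x
  pos_neg : ∀ x y : V, pos x y → neg x y → False

namespace EdgeSignedGraph

variable {V : Type*}

/-- The signed adjacency matrix: `1` on `(+)`-edges, `−1` on `(−)`-edges, `0` otherwise. -/
noncomputable def M (S : EdgeSignedGraph V) : Matrix V V ℝ := by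
  classical
  exact Matrix.of fun x y => if S.pos x y then (1 : ℝ) else if S.neg x y then -1 else 0

/-- The underlying simple graph of an edge-signed graph. -/
def toSimpleGraph (S : EdgeSignedGraph V) : SimpleGraph V where
  Adj x y := S.pos x y ∨ S.neg x y
  symm := ⟨fun x y h => h.elim (fun h => Or.inl (S.pos_symm h)) (fun h => Or.inr (S.neg_symm h))⟩
  loopless := ⟨fun x h => h.elim (S.pos_irrefl x) (S.neg_irrefl x)⟩

/-- `S.HasInduced T`: the edge-signed graph `S` contains an induced edge-signed
subgraph isomorphic to `T`. -/
def HasInduced {W : Type*} (S : EdgeSignedGraph V) (T : EdgeSignedGraph W) : Prop :=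
  ∃ f : W → V, Function.Injective f ∧
    (∀ x y : W, T.pos x y ↔ S.pos (f x) (f y)) ∧
    (∀ x y : W, T.neg x y ↔ S.neg (f x) (f y))

end EdgeSignedGraph

/-- An isomorphism of edge-signed graphs. -/
structure EdgeSignedIso {V W : Type*} (S : EdgeSignedGraph V) (T : EdgeSignedGraph W) where
  toEquiv : V ≃ W
  pos_iff : ∀ x y : V, S.pos x y ↔ T.pos (toEquiv x) (toEquiv y)
  neg_iff : ∀ x y : V, S.neg x y ↔ T.neg (toEquiv x) (toEquiv y)

/-- The special graph `S(𝔥)` of a Hoffman graph: the edge-signed graph on the slim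
vertices where adjacent vertices with no common fat neighbor form a `(+)`-edge, and
non-adjacent vertices with a common fat neighbor form a `(−)`-edge. -/
def HoffmanGraph.special {V : Type*} (H : HoffmanGraph V) : EdgeSignedGraph H.Slim where
  pos x y := H.adj x.1 y.1 ∧ H.commonFat x.1 y.1 = ∅
  neg x y := x ≠ y ∧ ¬ H.adj x.1 y.1 ∧ (H.commonFat x.1 y.1).Nonempty
  pos_symm := @fun x y h => ⟨H.symm h.1, by rw [H.commonFat_comm]; exact h.2⟩
  neg_symm := @fun x y h =>
    ⟨h.1.symm, fun ha => h.2.1 (H.symm ha), by rw [H.commonFat_comm]; exact h.2.2⟩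
  pos_irrefl x h := H.loopless x.1 h.1
  neg_irrefl x h := h.1 rfl
  pos_neg x y hp hn := hn.2.1 hp.1

/-- The edge-signed graph `Q_{p,q,r}`: a `(+)`-clique `V_r = Fin r`, a set
`V_p = Fin p` matched by `(+)`-edges to the first `p` vertices of `V_r`, and a set
`V_q = Fin q` matched by `(−)`-edges to the next `q` vertices of `V_r`. -/
def Q (p q r : ℕ) : EdgeSignedGraph (Fin p ⊕ Fin q ⊕ Fin r) where
  pos x y :=
    (∃ (i : Fin p) (k : Fin r), x = Sum.inl i ∧ y = Sum.inr (Sum.inr k) ∧ (k : ℕ) = (i : ℕ)) ∨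
    (∃ (i : Fin p) (k : Fin r), y = Sum.inl i ∧ x = Sum.inr (Sum.inr k) ∧ (k : ℕ) = (i : ℕ)) ∨
    (∃ (k l : Fin r), x = Sum.inr (Sum.inr k) ∧ y = Sum.inr (Sum.inr l) ∧ k ≠ l)
  neg x y :=
    (∃ (j : Fin q) (k : Fin r),
      x = Sum.inr (Sum.inl j) ∧ y = Sum.inr (Sum.inr k) ∧ (k : ℕ) = p + (j : ℕ)) ∨
    (∃ (j : Fin q) (k : Fin r),
      y = Sum.inr (Sum.inl j) ∧ x = Sum.inr (Sum.inr k) ∧ (k : ℕ) = p + (j : ℕ))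
  pos_symm := @fun x y h => by
    rcases h with ⟨i, k, h1, h2, h3⟩ | ⟨i, k, h1, h2, h3⟩ | ⟨k, l, h1, h2, h3⟩
    · exact Or.inr (Or.inl ⟨i, k, h1, h2, h3⟩)
    · exact Or.inl ⟨i, k, h1, h2, h3⟩
    · exact Or.inr (Or.inr ⟨l, k, h2, h1, h3.symm⟩)
  neg_symm := @fun x y h => by
    rcases h with ⟨j, k, h1, h2, h3⟩ | ⟨j, k, h1, h2, h3⟩
    · exact Or.inr ⟨j, k, h1, h2, h3⟩
    · exact Or.inl ⟨j, k, h1, h2, h3⟩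
  pos_irrefl x h := by
    rcases h with ⟨i, k, h1, h2, h3⟩ | ⟨i, k, h1, h2, h3⟩ | ⟨k, l, h1, h2, h3⟩ <;>
      subst h1 <;> simp_all
  neg_irrefl x h := by
    rcases h with ⟨j, k, h1, h2, h3⟩ | ⟨j, k, h1, h2, h3⟩ <;> subst h1 <;> simp_all
  pos_neg x y hp hn := by
    rcases hp with ⟨i, k, h1, h2, h3⟩ | ⟨i, k, h1, h2, h3⟩ | ⟨k, l, h1, h2, h3⟩ <;>
      rcases hn with ⟨j, m, g1, g2, g3⟩ | ⟨j, m, g1, g2, g3⟩ <;> subst h1 <;> simp_all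

/-- The edge-signed triangle `T₁` with exactly one `(+)`-edge and two `(−)`-edges. -/
def T1 : EdgeSignedGraph (Fin 3) where
  pos x y := (x = 0 ∧ y = 1) ∨ (x = 1 ∧ y = 0)
  neg x y := x ≠ y ∧ (x = 2 ∨ y = 2)
  pos_symm := @fun x y h => by tauto
  neg_symm := @fun x y h => ⟨h.1.symm, h.2.symm⟩
  pos_irrefl x h := by
    rcases h with ⟨h1, h2⟩ | ⟨h1, h2⟩ <;> subst h1 <;> exact absurd h2 (by decide)
  neg_irrefl x h := h.1 rfl
  pos_neg x y hp hn := by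
    rcases hp with ⟨h1, h2⟩ | ⟨h1, h2⟩ <;> subst h1 <;> subst h2 <;>
      exact absurd hn.2 (by decide)

/-- The golden ratio `τ = (1 + √5)/2`. -/
noncomputable def goldenRatio' : ℝ := (1 + Real.sqrt 5) / 2

/-!
By condition (iv) of a decomposition, two slim vertices in different parts have
`B`-entry `1 - 1 = 0` if adjacent and `0 - 0 = 0` otherwise, while by (iii) the common fat
neighbours of two slim vertices of the same part all lie in that part. Hence, after ordering
the slim vertices part by part, `B(𝔥)` is the block diagonal matrix with blocks `B(𝔥^i)`, and
the eigenvalues of a block diagonal matrix are those of its blocks.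
-/

theorem csInf_iUnion_of_finite {α ι : Type*} [ConditionallyCompleteLinearOrder α] [Finite ι]
    {S : ι → Set α} (hne : ∀ i, (S i).Nonempty) (hfin : ∀ i, (S i).Finite) :
    sInf (⋃ i, S i) = ⨅ i, sInf (S i) := by
  rcases isEmpty_or_nonempty ι with hι | hι
  · simp [iInf, Set.range_eq_empty]
  have hUfin : (⋃ i, S i).Finite := Set.finite_iUnion hfin
  have hUne : (⋃ i, S i).Nonempty := (hne (Classical.arbitrary ι)).mono (Set.subset_iUnion S _)
  refine le_antisymm (le_ciInf fun i =>
    csInf_le_csInf hUfin.bddBelow (hne i) (Set.subset_iUnion S i)) ?_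
  obtain ⟨i, hi⟩ := Set.mem_iUnion.1 (hUne.csInf_mem hUfin)
  exact (ciInf_le (Set.finite_range _).bddBelow i).trans (csInf_le (hfin i).bddBelow hi)

namespace Matrix

variable {K : Type*} [Field K] {n : Type*} [Fintype n] [DecidableEq n]

theorem mem_spectrum_iff_exists_mulVec_eq_smul {M : Matrix n n K} {t : K} :
    t ∈ spectrum K M ↔ ∃ v, v ≠ 0 ∧ M *ᵥ v = t • v := by
  rw [← spectrum_toLin', ← Module.End.hasEigenvalue_iff_mem_spectrum]
  constructor
  · intro h
    obtain ⟨v, hv⟩ := h.exists_hasEigenvector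
    exact ⟨v, hv.2, by simpa using Module.End.mem_eigenspace_iff.1 hv.1⟩
  · rintro ⟨v, hv, hMv⟩
    exact Module.End.hasEigenvalue_of_hasEigenvector
      ⟨Module.End.mem_eigenspace_iff.2 (by simpa using hMv), hv⟩

theorem spectrum_reindex {m : Type*} [Fintype m] [DecidableEq m] (e : m ≃ n) (M : Matrix m m K) :
    spectrum K (reindex e e M) = spectrum K M :=
  AlgEquiv.spectrum_eq (reindexAlgEquiv K K e) M

variable {ι : Type*} [Fintype ι] [DecidableEq ι] {m : ι → Type*} [∀ i, Fintype (m i)]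

theorem blockDiagonal'_mulVec_apply (d : ∀ i, Matrix (m i) (m i) K) (v : (Σ i, m i) → K)
    (i : ι) (x : m i) :
    (blockDiagonal' d *ᵥ v) ⟨i, x⟩ = (d i *ᵥ fun y => v ⟨i, y⟩) x := by
  simp only [mulVec, dotProduct, Fintype.sum_sigma]
  rw [Finset.sum_eq_single i]
  · simp only [blockDiagonal'_apply_eq]
  · intro j _ hji
    exact Finset.sum_eq_zero fun y _ => by rw [blockDiagonal'_apply_ne d x y hji.symm, zero_mul]
  · exact fun h => absurd (Finset.mem_univ i) h

theorem spectrum_blockDiagonal' [∀ i, DecidableEq (m i)] (d : ∀ i, Matrix (m i) (m i) K) :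
    spectrum K (blockDiagonal' d) = ⋃ i, spectrum K (d i) := by
  ext t
  simp only [Set.mem_iUnion, mem_spectrum_iff_exists_mulVec_eq_smul]
  constructor
  · rintro ⟨v, hv, hdv⟩
    obtain ⟨⟨i, x⟩, hx⟩ := Function.ne_iff.1 hv
    refine ⟨i, fun y => v ⟨i, y⟩, Function.ne_iff.2 ⟨x, hx⟩, funext fun y => ?_⟩
    rw [← blockDiagonal'_mulVec_apply, hdv]
    rfl
  · rintro ⟨i, u, hu, hdu⟩
    set v : (Σ i, m i) → K := Function.extend (Sigma.mk i) u 0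
    have hv_same : (fun y => v ⟨i, y⟩) = u :=
      funext (sigma_mk_injective.extend_apply u 0)
    have hv_ne : ∀ j, j ≠ i → (fun y => v ⟨j, y⟩) = 0 := by
      intro j hji
      funext y
      refine Function.extend_apply' _ _ _ ?_
      rintro ⟨a, ha⟩
      exact hji (congrArg Sigma.fst ha).symm
    refine ⟨v, fun h => hu ?_, funext fun ⟨j, y⟩ => ?_⟩
    · rw [← hv_same, h]
      rfl
    rw [blockDiagonal'_mulVec_apply]
    by_cases hji : j = i
    · subst hji
      rw [hv_same, hdu, Pi.smul_apply, Pi.smul_apply, ← congrFun hv_same y]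
    · have hvy : v ⟨j, y⟩ = 0 := congrFun (hv_ne j hji) y
      rw [hv_ne j hji, mulVec_zero, Pi.smul_apply, hvy, smul_zero, Pi.zero_apply]

end Matrix

theorem minEig_eq_sInf_spectrum {n : Type*} [Fintype n] [DecidableEq n] (M : Matrix n n ℝ) :
    minEig M = sInf (spectrum ℝ M) := by
  unfold minEig
  congr 1
  ext t
  exact Matrix.mem_spectrum_iff_exists_mulVec_eq_smul.symm

namespace HoffmanGraph

variable {V : Type*} (H : HoffmanGraph V)

open scoped Classical in
theorem B_apply (x y : H.Slim) :
    H.B x y = (if H.adj x.1 y.1 then (1 : ℝ) else 0) - ((H.commonFat x.1 y.1).ncard : ℝ) := rfl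

theorem B_isHermitian : H.B.IsHermitian := by
  classical
  refine Matrix.isHermitian_iff_isSymm.2 (Matrix.IsSymm.ext fun x y => ?_)
  rw [B_apply, B_apply, H.commonFat_comm]
  congr 1
  exact if_congr ⟨H.symm, H.symm⟩ rfl rfl

theorem spectrum_B_nonempty [Fintype V] [DecidableEq H.Slim] [Nonempty H.Slim] :
    (spectrum ℝ H.B).Nonempty :=
  ⟨_, H.B_isHermitian.eigenvalues_mem_spectrum_real (Classical.arbitrary _)⟩

variable {ι : Type*} {W : ι → Finset V}

namespace IsDecomposition

variable {H} (hD : H.IsDecomposition W)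

/-- The part `𝔥^i` of a decomposition. -/
abbrev part (i : ι) : HoffmanGraph {v : V // v ∈ W i} :=
  H.induce (W i) (hD.part_fat i)

theorem image_commonFat_part {i : ι} (x : (hD.part i).Slim) (y : {v : V // v ∈ W i}) :
    Subtype.val '' ((hD.part i).commonFat x.1 y) = H.commonFat x.1.1 y.1 := by
  ext f
  simp only [Set.mem_image, commonFat, Set.mem_ofPred_eq, induce]
  constructor
  · rintro ⟨g, hg, rfl⟩
    exact hg
  · rintro ⟨hf, hxf, hyf⟩
    exact ⟨⟨f, hD.fat_closed i x.1.1 f x.1.2 x.2 hf hxf⟩, ⟨hf, hxf, hyf⟩, rfl⟩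

def slimIncl (i : ι) (x : (hD.part i).Slim) : H.Slim :=
  ⟨x.1.1, x.2⟩

theorem B_part_apply (i : ι) (x y : (hD.part i).Slim) :
    (hD.part i).B x y = H.B (hD.slimIncl i x) (hD.slimIncl i y) := by
  have hcard : ((hD.part i).commonFat x.1 y.1).ncard = (H.commonFat x.1.1 y.1.1).ncard := by
    rw [← hD.image_commonFat_part x y.1, Set.ncard_image_of_injective _ Subtype.val_injective]
  rw [B_apply, B_apply, hcard]
  rfl

theorem B_slimIncl_of_ne {i j : ι} (hij : i ≠ j) (x : (hD.part i).Slim) (y : (hD.part j).Slim) :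
    H.B (hD.slimIncl i x) (hD.slimIncl j y) = 0 := by
  obtain ⟨hle, hone⟩ := hD.cross i j hij x.1.1 y.1.1 x.1.2 y.1.2 x.2 y.2
  rw [B_apply, sub_eq_zero]
  dsimp only [slimIncl]
  by_cases hxy : H.adj x.1.1 y.1.1
  · simp only [hxy, if_true, hone.2 hxy, Nat.cast_one]
  · have hzero : (H.commonFat x.1.1 y.1.1).ncard = 0 := by
      have := mt hone.1 hxy
      omega
    simp only [hxy, if_false, hzero, Nat.cast_zero]

noncomputable def sigmaSlimEquiv : (Σ i, (hD.part i).Slim) ≃ H.Slim :=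
  Equiv.ofBijective (fun p => hD.slimIncl p.1 p.2) <| by
    constructor
    · rintro ⟨i, x⟩ ⟨j, y⟩ h
      have hval : x.1.1 = y.1.1 := congrArg Subtype.val h
      obtain rfl : i = j := by
        by_contra hij
        exact hD.slim_disj i j hij x.1.1 x.2 x.1.2 (hval ▸ y.1.2)
      exact congrArg (Sigma.mk i) (Subtype.ext (Subtype.ext hval))
    · intro s
      obtain ⟨i, hi⟩ := hD.cover s.1
      exact ⟨⟨i, ⟨⟨s.1, hi⟩, s.2⟩⟩, rfl⟩

theorem B_eq_reindex_blockDiagonal' [DecidableEq ι] :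
    H.B = Matrix.reindex hD.sigmaSlimEquiv hD.sigmaSlimEquiv
      (Matrix.blockDiagonal' fun i => (hD.part i).B) := by
  ext s t
  obtain ⟨⟨i, x⟩, rfl⟩ := hD.sigmaSlimEquiv.surjective s
  obtain ⟨⟨j, y⟩, rfl⟩ := hD.sigmaSlimEquiv.surjective t
  rw [Matrix.reindex_apply, Matrix.submatrix_apply, Equiv.symm_apply_apply,
    Equiv.symm_apply_apply]
  by_cases hij : i = j
  · subst hij
    rw [Matrix.blockDiagonal'_apply_eq, hD.B_part_apply]
    rfl
  · rw [Matrix.blockDiagonal'_apply_ne _ _ _ hij]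
    exact hD.B_slimIncl_of_ne hij x y

theorem spectrum_B [Fintype V] [DecidableEq V] [Fintype ι] [DecidableEq ι] :
    spectrum ℝ H.B = ⋃ i, spectrum ℝ (hD.part i).B := by
  rw [hD.B_eq_reindex_blockDiagonal', Matrix.spectrum_reindex, Matrix.spectrum_blockDiagonal']

end IsDecomposition

end HoffmanGraph

theorem statement2_general {V ι : Type*} [Fintype V] [Fintype ι]
    (H : HoffmanGraph V) (W : ι → Finset V) (hD : H.IsDecomposition W)
    (hslim : ∀ i, ∃ x ∈ W i, ¬ H.fat x) :
    H.lamMin = ⨅ i, (H.induce (W i) (hD.part_fat i)).lamMin := by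
  -- not `classical`: a decidable `H.fat` would put another `Fintype` instance on slim vertices
  have := Classical.decEq V
  have := Classical.decEq ι
  have hne : ∀ i, (spectrum ℝ (hD.part i).B).Nonempty := fun i => by
    obtain ⟨x, hx, hxs⟩ := hslim i
    have : Nonempty (hD.part i).Slim := ⟨⟨⟨x, hx⟩, hxs⟩⟩
    exact (hD.part i).spectrum_B_nonempty
  simp only [HoffmanGraph.lamMin, minEig_eq_sInf_spectrum, hD.spectrum_B]
  exact csInf_iUnion_of_finite hne fun i => Matrix.finite_real_spectrum

/-- Lemma 2.12 of JKMT. If a Hoffman graph `H` has a decomposition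
`{𝔥^i}_{i=1}^n` (each part having at least one slim vertex), then
`λ_min(H) = min { λ_min(𝔥^i) : 1 ≤ i ≤ n }`. -/
theorem statement2 {V ι : Type*} [Fintype V] [Fintype ι] [Nonempty ι]
    (H : HoffmanGraph V) (W : ι → Finset V) (hD : H.IsDecomposition W)
    (hslim : ∀ i, ∃ x ∈ W i, ¬ H.fat x) :
    H.lamMin = ⨅ i, (H.induce (W i) (hD.part_fat i)).lamMin :=
  statement2_general H W hD hslim
end

section
/- Let G be a slim graph (a Hoffman graph with no fat vertices, i.e. an ordinary finite simple graph) with at least two vertices and maximum degree k. Then G is (−k)-reducible. -/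
theorem neg_le_minEig_of_sum_abs_le {n : Type*} [Fintype n] (M : Matrix n n ℝ) {k : ℝ}
    (hk : 0 ≤ k) (h : ∀ i, ∑ j, |M i j| ≤ k) : -k ≤ minEig M := by
  classical
  rcases Set.eq_empty_or_nonempty {t : ℝ | ∃ v : n → ℝ, v ≠ 0 ∧ M.mulVec v = t • v} with he | hne
  · rw [minEig, he, Real.sInf_empty]
    linarith
  refine le_csInf hne ?_
  rintro t ⟨v, hv, hMv⟩
  have ht : Module.End.HasEigenvalue (Matrix.toLin' M) t :=
    Module.End.hasEigenvalue_of_hasEigenvector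
      ⟨Module.End.mem_eigenspace_iff.2 (by rwa [Matrix.toLin'_apply]), hv⟩
  obtain ⟨i, hi⟩ := eigenvalue_mem_ball ht
  rw [Metric.mem_closedBall, Real.dist_eq] at hi
  have hrow : |M i i| + ∑ j ∈ Finset.univ.erase i, |M i j| ≤ k := by
    rw [Finset.add_sum_erase _ (fun j => |M i j|) (Finset.mem_univ i)]
    exact h i
  simp only [Real.norm_eq_abs] at hi
  linarith [neg_abs_le (t - M i i), neg_abs_le (M i i)]

namespace HoffmanGraph

variable {V U : Type*}

lemma ne_of_adj (H : HoffmanGraph V) {x y : V} (h : H.adj x y) : x ≠ y :=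
  fun hxy => H.loopless x (hxy ▸ h)

lemma adj_comm (H : HoffmanGraph V) (x y : V) : H.adj x y ↔ H.adj y x := ⟨H.symm, H.symm⟩

def comap (H : HoffmanGraph U) (e : V ≃ U) : HoffmanGraph V where
  adj x y := H.adj (e x) (e y)
  symm h := H.symm h
  loopless x := H.loopless (e x)
  fat x := H.fat (e x)
  fat_slim x hx := by
    obtain ⟨y, hxy, hy⟩ := H.fat_slim (e x) hx
    exact ⟨e.symm y, by simpa using hxy, by simpa using hy⟩
  fat_nonadj x y hx hy := H.fat_nonadj (e x) (e y) hx hy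

@[simp] lemma comap_adj (H : HoffmanGraph U) (e : V ≃ U) (x y : V) :
    (H.comap e).adj x y ↔ H.adj (e x) (e y) := Iff.rfl

@[simp] lemma comap_fat (H : HoffmanGraph U) (e : V ≃ U) (x : V) :
    (H.comap e).fat x ↔ H.fat (e x) := Iff.rfl

lemma degree_comap (H : HoffmanGraph U) (e : V ≃ U) (x : V) :
    (H.comap e).degree x = H.degree (e x) :=
  Set.ncard_preimage_of_injective_subset_range (s := {y | H.adj (e x) y}) e.injective
    (by simp)

-- `lamMin` is elaborated with this instance, not with `Subtype.fintype`.
attribute [local instance high] instFintypeSlim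

open Classical in
/-- The entry of `B` at a pair of vertices of `V`, so that rows of `B` can be summed over `V`. -/
noncomputable def bEntry (H : HoffmanGraph V) (x y : V) : ℝ :=
  (if H.adj x y then (1 : ℝ) else 0) - ((H.commonFat x y).ncard : ℝ)

lemma sum_ite_adj_le_degree [Finite V] (H : HoffmanGraph V) [DecidableRel H.adj] (x : V)
    (s : Finset V) : ∑ y ∈ s, (if H.adj x y then (1 : ℝ) else 0) ≤ H.degree x := by
  rw [Finset.sum_boole, ← Set.ncard_coe_finset, degree]
  have hsub : (↑(s.filter (H.adj x ·)) : Set V) ⊆ {y | H.adj x y} := fun y hy =>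
    (Finset.mem_filter.1 hy).2
  exact_mod_cast Set.ncard_le_ncard hsub (Set.toFinite _)

lemma neg_le_lamMin_of_sum_abs_bEntry_le [Fintype V] (H : HoffmanGraph V)
    [DecidablePred H.fat] {k : ℝ} (hk : 0 ≤ k)
    (h : ∀ x, ¬ H.fat x → ∑ y ∈ Finset.univ.filter (¬ H.fat ·), |H.bEntry x y| ≤ k) :
    -k ≤ H.lamMin := by
  refine neg_le_minEig_of_sum_abs_le _ hk fun x => ?_
  calc _ = ∑ y ∈ Finset.univ.filter (¬ H.fat ·), |H.bEntry x y| :=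
        (Finset.sum_subtype _ (fun _ => by simp) _).symm
    _ ≤ k := h x x.2

lemma neg_le_lamMin_of_slim [Fintype V] (H : HoffmanGraph V)
    (hslim : ∀ x, ¬ H.fat x) {k : ℕ} (hk : ∀ x, H.degree x ≤ k) : -(k : ℝ) ≤ H.lamMin := by
  classical
  refine H.neg_le_lamMin_of_sum_abs_bEntry_le (Nat.cast_nonneg k) fun x _ => ?_
  have hB : ∀ y, |H.bEntry x y| = if H.adj x y then 1 else 0 := fun y => by
    have hempty : H.commonFat x y = ∅ := Set.eq_empty_of_forall_notMem fun f hf => hslim f hf.1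
    rw [bEntry, hempty, Set.ncard_empty]
    split_ifs <;> simp
  simp only [hB]
  exact (H.sum_ite_adj_le_degree x _).trans (by exact_mod_cast hk x)

lemma ncard_commonFat_induce (H : HoffmanGraph V) (W : Finset V) (hW)
    (hclosed : ∀ x y, x ∈ W → ¬ H.fat x → H.fat y → H.adj x y → y ∈ W)
    {x : {v // v ∈ W}} (hx : ¬ H.fat x) (y : {v // v ∈ W}) :
    ((H.induce W hW).commonFat x y).ncard = (H.commonFat x y).ncard :=
  Set.ncard_preimage_of_injective_subset_range (s := H.commonFat x y) Subtype.val_injective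
    fun f hf => ⟨⟨f, hclosed x f x.2 hx hf.1 hf.2.1⟩, rfl⟩

lemma neg_le_lamMin_induce [Fintype V] (H : HoffmanGraph V) [DecidablePred H.fat]
    (W : Finset V) (hW)
    (hclosed : ∀ x y, x ∈ W → ¬ H.fat x → H.fat y → H.adj x y → y ∈ W) {k : ℝ} (hk : 0 ≤ k)
    (h : ∀ x ∈ W, ¬ H.fat x → ∑ y ∈ W.filter (¬ H.fat ·), |H.bEntry x y| ≤ k) :
    -k ≤ (H.induce W hW).lamMin := by
  classical
  refine neg_le_minEig_of_sum_abs_le _ hk fun x => ?_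
  have hrow : ∀ y, (H.induce W hW).bEntry x y = H.bEntry x y := fun y => by
    simp only [bEntry, ncard_commonFat_induce H W hW hclosed x.2]
    rfl
  calc ∑ y, |(H.induce W hW).B x y| = ∑ y : {v // v ∈ W ∧ ¬ H.fat v}, |H.bEntry x y| :=
        Finset.sum_equiv (Equiv.subtypeSubtypeEquivSubtypeInter (· ∈ W) (¬ H.fat ·))
          (fun _ => iff_of_true (Finset.mem_univ _) (Finset.mem_univ _))
          fun y _ => congrArg abs (hrow y)
    _ = ∑ y ∈ W.filter (¬ H.fat ·), |H.bEntry x y| :=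
        (Finset.sum_subtype (W.filter (¬ H.fat ·)) (fun _ => Finset.mem_filter)
          fun y => |H.bEntry x y|).symm
    _ ≤ k := h x.1.1 x.1.2 x.2

-- Every vertex of `V` becomes slim, whatever its label in `H`.
def splitAt (H : HoffmanGraph V) (v₀ : V) : HoffmanGraph (V ⊕ {u // H.adj v₀ u}) where
  adj
    | .inl x, .inl y => H.adj x y
    | .inl x, .inr u | .inr u, .inl x => x = v₀ ∨ x = u
    | .inr _, .inr _ => False
  symm := by
    rintro (x | u) (y | w) h
    exacts [H.symm h, h, h, h]
  loopless := by
    rintro (x | u)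
    exacts [H.loopless x, id]
  fat z := z.isRight
  fat_slim := by
    rintro (x | u) hz
    exacts [absurd hz (by simp), ⟨.inl v₀, Or.inl rfl, by simp⟩]
  fat_nonadj := by
    rintro (x | u) (y | w) hx hy
    exacts [absurd hx (by simp), absurd hx (by simp), absurd hy (by simp), id]

section splitAt

variable (H : HoffmanGraph V) (v₀ : V)

@[simp] lemma splitAt_adj_inl_inl (x y : V) : (H.splitAt v₀).adj (.inl x) (.inl y) ↔ H.adj x y :=
  Iff.rfl

@[simp] lemma splitAt_adj_inl_inr (x : V) (u : {u // H.adj v₀ u}) :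
    (H.splitAt v₀).adj (.inl x) (.inr u) ↔ x = v₀ ∨ x = u := Iff.rfl

@[simp] lemma splitAt_adj_inr_inl (x : V) (u : {u // H.adj v₀ u}) :
    (H.splitAt v₀).adj (.inr u) (.inl x) ↔ x = v₀ ∨ x = u := Iff.rfl

@[simp] lemma splitAt_fat (z : V ⊕ {u // H.adj v₀ u}) : (H.splitAt v₀).fat z ↔ z.isRight :=
  Iff.rfl

lemma commonFat_splitAt_inl_inl_self : (H.splitAt v₀).commonFat (.inl v₀) (.inl v₀) =
    Set.range .inr := by
  ext (x | u) <;> simp [commonFat]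

lemma bEntry_splitAt_inl_inl_self : (H.splitAt v₀).bEntry (.inl v₀) (.inl v₀) = -H.degree v₀ := by
  rw [bEntry, commonFat_splitAt_inl_inl_self, Set.ncard_range_of_injective Sum.inr_injective,
    if_neg ((H.splitAt v₀).loopless _), zero_sub]
  rfl

instance : DecidablePred (H.splitAt v₀).fat := fun z => inferInstanceAs (Decidable z.isRight)

variable [DecidableEq V] [DecidableRel H.adj]

lemma ncard_commonFat_splitAt_inl_inl {a b : V} (hb : b ≠ v₀) :
    ((H.splitAt v₀).commonFat (.inl a) (.inl b)).ncard =
      if (a = v₀ ∨ a = b) ∧ H.adj v₀ b then 1 else 0 := by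
  split_ifs with h
  · rw [Set.ncard_eq_one]
    refine ⟨.inr ⟨b, h.2⟩, ?_⟩
    ext (x | u)
    · simp [commonFat]
    · simp only [commonFat, Set.mem_ofPred_eq, splitAt_fat, splitAt_adj_inl_inr,
        Set.mem_singleton_iff, Sum.inr.injEq, Sum.isRight_inr, true_and]
      constructor
      · rintro ⟨-, hbu⟩
        exact Subtype.ext (hbu.resolve_left hb).symm
      · rintro rfl
        exact ⟨h.1, Or.inr rfl⟩
  · rw [(Set.eq_empty_iff_forall_notMem (s := (H.splitAt v₀).commonFat _ _)).2 ?_,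
      Set.ncard_empty]
    rintro (x | u) ⟨hu, ha, hbu⟩
    · exact absurd hu (by simp)
    · rcases hbu with rfl | rfl
      exacts [hb rfl, h ⟨ha, u.2⟩]

lemma abs_bEntry_splitAt_inl_inl {a b : V} (ha : a ≠ v₀) (hb : b ≠ v₀) :
    |(H.splitAt v₀).bEntry (.inl a) (.inl b)| =
      if H.adj a (Equiv.swap a v₀ b) then 1 else 0 := by
  rw [bEntry, ncard_commonFat_splitAt_inl_inl H v₀ hb]
  rcases eq_or_ne a b with rfl | hab
  · have hloop : ¬ (H.splitAt v₀).adj (.inl a) (.inl a) := (H.splitAt v₀).loopless _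
    by_cases h : H.adj v₀ a <;> simp [hloop, h, H.adj_comm a v₀, ha]
  · by_cases h : H.adj a b <;> simp [h, hab, ha, Equiv.swap_apply_of_ne_of_ne hab.symm hb]

variable [Fintype V]

def splitParts : Fin 2 → Finset (V ⊕ {u // H.adj v₀ u}) :=
  ![Finset.univ.filter (fun z => z = .inl v₀ ∨ z.isRight), Finset.univ.erase (.inl v₀)]

@[simp] lemma mem_splitParts_zero {z : V ⊕ {u // H.adj v₀ u}} :
    z ∈ H.splitParts v₀ 0 ↔ z = .inl v₀ ∨ z.isRight := by
  simp [splitParts]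

@[simp] lemma mem_splitParts_one {z : V ⊕ {u // H.adj v₀ u}} :
    z ∈ H.splitParts v₀ 1 ↔ z ≠ .inl v₀ := by
  simp [splitParts]

lemma splitParts_fat_closed (i : Fin 2) {y : V ⊕ {u // H.adj v₀ u}}
    (hy : (H.splitAt v₀).fat y) : y ∈ H.splitParts v₀ i := by
  rcases y with y | u
  · exact absurd hy (by simp)
  · fin_cases i <;> simp

lemma filter_slim_splitParts_zero :
    (H.splitParts v₀ 0).filter (¬ (H.splitAt v₀).fat ·) = {.inl v₀} := by
  ext (x | u) <;> simp

lemma filter_slim_splitParts_one :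
    (H.splitParts v₀ 1).filter (¬ (H.splitAt v₀).fat ·) =
      (Finset.univ.erase v₀).map .inl := by
  ext (x | u) <;> simp

lemma isDecomposition_splitParts {w : V} (hw : w ≠ v₀) :
    (H.splitAt v₀).IsDecomposition (H.splitParts v₀) where
  nonempty := Fin.forall_fin_two.2 ⟨⟨.inl v₀, by simp⟩, ⟨.inl w, by simpa⟩⟩
  cover z := by
    by_cases hz : z = .inl v₀
    exacts [⟨0, by simp [hz]⟩, ⟨1, by simpa⟩]
  slim_disj := by
    rintro i j hij (x | u) hx hi hj
    · fin_cases i <;> fin_cases j <;> simp_all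
    · exact hx (by simp)
  fat_closed i x y _ _ hy _ := H.splitParts_fat_closed v₀ i hy
  part_fat := by
    refine Fin.forall_fin_two.2 ⟨?_, ?_⟩ <;> rintro (x | u) - hu
    · exact absurd hu (by simp)
    · exact ⟨.inl v₀, by simp, by simp, Or.inl rfl⟩
    · exact absurd hu (by simp)
    · refine ⟨.inl u, by simpa using (H.ne_of_adj u.2).symm, by simp, Or.inr rfl⟩
  cross := by
    have hcross : ∀ x y, x ∈ H.splitParts v₀ 0 → y ∈ H.splitParts v₀ 1 →
        ¬ (H.splitAt v₀).fat x → ¬ (H.splitAt v₀).fat y →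
        ((H.splitAt v₀).commonFat x y).ncard ≤ 1 ∧
          (((H.splitAt v₀).commonFat x y).ncard = 1 ↔ (H.splitAt v₀).adj x y) := by
      rintro (a | u) (b | u) hx hy hxs hys
      · rw [show a = v₀ by simpa using hx,
          ncard_commonFat_splitAt_inl_inl H v₀ (by simpa using hy)]
        by_cases h : H.adj v₀ b <;> simp [h]
      · exact (hys rfl).elim
      · exact (hxs rfl).elim
      · exact (hxs rfl).elim
    intro i j hij x y hx hy hxs hys
    fin_cases i <;> fin_cases j
    · exact absurd rfl hij
    · exact hcross x y hx hy hxs hys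
    · rw [commonFat_comm, adj_comm]
      exact hcross y x hy hx hys hxs
    · exact absurd rfl hij

lemma sum_abs_bEntry_splitParts_le {k : ℕ} (hk : ∀ x, H.degree x ≤ k) :
    ∀ i, ∀ x ∈ H.splitParts v₀ i, ¬ (H.splitAt v₀).fat x →
      ∑ y ∈ (H.splitParts v₀ i).filter (¬ (H.splitAt v₀).fat ·),
        |(H.splitAt v₀).bEntry x y| ≤ k := by
  refine Fin.forall_fin_two.2 ⟨?_, ?_⟩ <;> rintro (a | u) hx hxs
  · rw [show a = v₀ by simpa using hx, filter_slim_splitParts_zero, Finset.sum_singleton,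
      bEntry_splitAt_inl_inl_self, abs_neg, Nat.abs_cast]
    exact_mod_cast hk v₀
  · exact (hxs rfl).elim
  · have ha : a ≠ v₀ := by simpa using hx
    calc _ = ∑ b ∈ Finset.univ.erase v₀, (if H.adj a (Equiv.swap a v₀ b) then (1 : ℝ) else 0) := by
          rw [filter_slim_splitParts_one, Finset.sum_map]
          exact Finset.sum_congr rfl fun b hb =>
            abs_bEntry_splitAt_inl_inl H v₀ ha (Finset.ne_of_mem_erase hb)
      _ = ∑ c ∈ (Finset.univ.erase v₀).map (Equiv.swap a v₀).toEmbedding,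
            (if H.adj a c then (1 : ℝ) else 0) := by rw [Finset.sum_map]; rfl
      _ ≤ k := (H.sum_ite_adj_le_degree a _).trans (by exact_mod_cast hk a)
  · exact (hxs rfl).elim

lemma neg_le_lamMin_splitParts {k : ℕ} (hk : ∀ x, H.degree x ≤ k) (i : Fin 2) (hW) :
    -(k : ℝ) ≤ ((H.splitAt v₀).induce (H.splitParts v₀ i) hW).lamMin :=
  neg_le_lamMin_induce _ _ hW (fun _ _ _ _ hy _ => H.splitParts_fat_closed v₀ i hy)
    (Nat.cast_nonneg k) (H.sum_abs_bEntry_splitParts_le v₀ hk i)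

end splitAt

end HoffmanGraph

theorem statement3_general {V : Type*} [Fintype V] (H : HoffmanGraph V)
    (hslim : ∀ x : V, ¬ H.fat x) (hcard : 2 ≤ Fintype.card V)
    (k : ℕ) (hk : ∀ x : V, H.degree x ≤ k) :
    H.AlphaReducible (-(k : ℝ)) := by
  classical
  obtain ⟨v₀, w, hw⟩ := Fintype.exists_pair_of_one_lt_card hcard
  -- `AlphaReducible` asks for a vertex type in `Type`, so relabel `V` by `Fin n` first.
  let e := Fintype.equivFin V
  let H₀ := H.comap e.symm
  have hk₀ : ∀ i, H₀.degree i ≤ k := fun i => (H.degree_comap e.symm i).trans_le (hk _)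
  have hw₀ : e w ≠ e v₀ := e.injective.ne hw.symm
  refine ⟨H.neg_le_lamMin_of_slim hslim hk, _, inferInstance, H₀.splitAt (e v₀),
    ⟨.inl ∘ e, Sum.inl_injective.comp e.injective, fun x y => by simp [H₀],
      fun x => by simp [hslim x]⟩,
    H₀.splitParts (e v₀), H₀.isDecomposition_splitParts (e v₀) hw₀,
    fun i => H₀.neg_le_lamMin_splitParts (e v₀) hk₀ i _,
    Fin.forall_fin_two.2 ⟨⟨v₀, hslim v₀, by simp⟩, ⟨w, hslim w, by simpa using hw₀⟩⟩⟩

/-- A slim graph with at least two vertices and maximum degree `k`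
is `(−k)`-reducible. -/
theorem statement3 {V : Type*} [Fintype V] (H : HoffmanGraph V)
    (hslim : ∀ x : V, ¬ H.fat x) (hcard : 2 ≤ Fintype.card V)
    (k : ℕ) (hk : ∀ x : V, H.degree x ≤ k) (hk' : ∃ x : V, H.degree x = k) :
    H.AlphaReducible (-(k : ℝ)) :=
  statement3_general H hslim hcard k hk
end

section
/- For all nonnegative integers p, q, r with p + q ≤ r and r ≥ 1, the smallest eigenvalue of the signed adjacency matrix of Q_{p,q,r} satisfies λ_min(Q_{p,q,r}) ≥ −τ, where τ = (1+√5)/2. -/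
open Finset Real goldenRatio Matrix

lemma le_minEig_of_forall_le_dotProduct_mulVec {n : Type*} [Fintype n] {M : Matrix n n ℝ}
    {a : ℝ} (ha : a ≤ 0) (h : ∀ v : n → ℝ, a * (v ⬝ᵥ v) ≤ v ⬝ᵥ M *ᵥ v) : a ≤ minEig M := by
  rcases Set.eq_empty_or_nonempty {t : ℝ | ∃ v : n → ℝ, v ≠ 0 ∧ M *ᵥ v = t • v} with he | hne
  · rw [minEig, he, Real.sInf_empty]; exact ha
  · refine le_csInf hne ?_
    rintro t ⟨v, hv, hvt⟩
    have hpos : 0 < v ⬝ᵥ v := by simpa using dotProduct_self_star_pos_iff.mpr hv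
    have hv := h v
    rw [hvt, dotProduct_smul, smul_eq_mul] at hv
    exact le_of_mul_le_mul_right hv hpos

lemma neg_two_mul_le_goldenRatio_mul_sq_add (x z : ℝ) :
    -(2 * x * z) ≤ φ * x ^ 2 + (φ - 1) * z ^ 2 := by
  have key : φ * (φ * x ^ 2 + (φ - 1) * z ^ 2 + 2 * x * z) = (φ * x + z) ^ 2 := by
    linear_combination z ^ 2 * goldenRatio_sq
  have hnonneg : 0 ≤ φ * x ^ 2 + (φ - 1) * z ^ 2 + 2 * x * z :=
    nonneg_of_mul_nonneg_right (key ▸ sq_nonneg _) goldenRatio_pos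
  linarith

lemma sum_sq_comp_le_of_injective {ι ρ : Type*} [Fintype ι] [Fintype ρ] {f : ι → ρ}
    (hf : Function.Injective f) (z : ρ → ℝ) : ∑ i, z (f i) ^ 2 ≤ ∑ k, z k ^ 2 := by
  calc ∑ i, z (f i) ^ 2 = ∑ k ∈ univ.map ⟨f, hf⟩, z k ^ 2 := by rw [sum_map]; rfl
    _ ≤ ∑ k, z k ^ 2 := sum_le_sum_of_subset_of_nonneg (subset_univ _) fun _ _ _ => sq_nonneg _

lemma neg_goldenRatio_mul_le_clique_add_matching {ι ρ : Type*} [Fintype ι] [Fintype ρ]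
    {f : ι → ρ} (hf : Function.Injective f) (w : ι → ℝ) (z : ρ → ℝ) :
    -φ * (∑ i, w i ^ 2 + ∑ k, z k ^ 2) ≤
      2 * ∑ i, w i * z (f i) + ((∑ k, z k) ^ 2 - ∑ k, z k ^ 2) := by
  have hmatch : -(2 * ∑ i, w i * z (f i)) ≤ φ * ∑ i, w i ^ 2 + (φ - 1) * ∑ i, z (f i) ^ 2 := by
    simp only [mul_sum, ← sum_add_distrib, ← sum_neg_distrib]
    exact sum_le_sum fun i _ => by
      simpa [mul_assoc] using neg_two_mul_le_goldenRatio_mul_sq_add (w i) (z (f i))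
  have hsub := mul_le_mul_of_nonneg_left (sum_sq_comp_le_of_injective hf z)
    (sub_nonneg.mpr one_lt_goldenRatio.le)
  nlinarith [sq_nonneg (∑ k, z k)]

namespace Q

variable {p q r : ℕ}

def matching (hpq : p + q ≤ r) : Fin p ⊕ Fin q → Fin r := Fin.castLE hpq ∘ finSumFinEquiv

def pendantWeight (v : Fin p ⊕ Fin q ⊕ Fin r → ℝ) : Fin p ⊕ Fin q → ℝ :=
  Sum.elim (fun i => v (.inl i)) (fun j => -v (.inr (.inl j)))

lemma matching_injective (hpq : p + q ≤ r) : Function.Injective (matching hpq) :=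
  (Fin.castLE_injective hpq).comp finSumFinEquiv.injective

lemma matching_inl_eq_iff (hpq : p + q ≤ r) (i : Fin p) (k : Fin r) :
    matching hpq (.inl i) = k ↔ (k : ℕ) = i := by
  simp [matching, Fin.ext_iff, eq_comm]

lemma matching_inr_eq_iff (hpq : p + q ≤ r) (j : Fin q) (k : Fin r) :
    matching hpq (.inr j) = k ↔ (k : ℕ) = p + j := by
  simp [matching, Fin.ext_iff, eq_comm]

lemma mulVec_inl (hpq : p + q ≤ r) (v : Fin p ⊕ Fin q ⊕ Fin r → ℝ) (i : Fin p) :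
    ((Q p q r).M *ᵥ v) (.inl i) = v (.inr (.inr (matching hpq (.inl i)))) := by
  simp [mulVec, dotProduct, EdgeSignedGraph.M, Q, ← matching_inl_eq_iff hpq]

lemma mulVec_inr_inl (hpq : p + q ≤ r) (v : Fin p ⊕ Fin q ⊕ Fin r → ℝ) (j : Fin q) :
    ((Q p q r).M *ᵥ v) (.inr (.inl j)) = -v (.inr (.inr (matching hpq (.inr j)))) := by
  simp [mulVec, dotProduct, EdgeSignedGraph.M, Q, ← matching_inr_eq_iff hpq]

lemma mulVec_inr_inr (hpq : p + q ≤ r) (v : Fin p ⊕ Fin q ⊕ Fin r → ℝ) (k : Fin r) :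
    ((Q p q r).M *ᵥ v) (.inr (.inr k)) =
      ∑ i, (if matching hpq (.inl i) = k then v (.inl i) else 0)
      - ∑ j, (if matching hpq (.inr j) = k then v (.inr (.inl j)) else 0)
      + (∑ l, v (.inr (.inr l)) - v (.inr (.inr k))) := by
  have hclique : ∑ l, (if k = l then 0 else v (.inr (.inr l))) =
      ∑ l, v (.inr (.inr l)) - v (.inr (.inr k)) := by
    rw [eq_sub_iff_add_eq,
      ← sum_ite_eq_of_mem univ k (fun l => v (.inr (.inr l))) (mem_univ k), ← sum_add_distrib]
    exact sum_congr rfl fun l _ => by split_ifs <;> simp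
  simp [mulVec, dotProduct, EdgeSignedGraph.M, Q, Fintype.sum_sum_type, matching_inl_eq_iff hpq,
    matching_inr_eq_iff hpq, hclique, sub_eq_add_neg, ← sum_neg_distrib, neg_ite, add_assoc]

lemma dotProduct_M_mulVec (hpq : p + q ≤ r) (v : Fin p ⊕ Fin q ⊕ Fin r → ℝ) :
    v ⬝ᵥ (Q p q r).M *ᵥ v =
      2 * ∑ s, pendantWeight v s * v (.inr (.inr (matching hpq s))) +
        ((∑ k, v (.inr (.inr k))) ^ 2 - ∑ k, v (.inr (.inr k)) ^ 2) := by
  have hmatch {α : Type} [Fintype α] (s : α → Fin p ⊕ Fin q) (w : α → ℝ) :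
      ∑ k, v (.inr (.inr k)) * ∑ a, (if matching hpq (s a) = k then w a else 0) =
        ∑ a, w a * v (.inr (.inr (matching hpq (s a)))) := by
    simp only [mul_sum, mul_ite, mul_zero]
    rw [sum_comm]
    simp [mul_comm]
  simp only [dotProduct, Fintype.sum_sum_type, mulVec_inl hpq, mulVec_inr_inl hpq,
    mulVec_inr_inr hpq, mul_add, mul_sub, sum_add_distrib, sum_sub_distrib, hmatch,
    pendantWeight, Sum.elim_inl, Sum.elim_inr]
  simp only [sq, ← sum_mul, neg_mul, mul_neg, sum_neg_distrib]
  ring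

lemma dotProduct_self_eq (v : Fin p ⊕ Fin q ⊕ Fin r → ℝ) :
    v ⬝ᵥ v = ∑ s, pendantWeight v s ^ 2 + ∑ k, v (.inr (.inr k)) ^ 2 := by
  simp [dotProduct, pendantWeight, Fintype.sum_sum_type, sq, add_assoc]

end Q

theorem statement9_general (p q r : ℕ) (hpq : p + q ≤ r) :
    minEig (Q p q r).M ≥ -((1 + Real.sqrt 5) / 2) := by
  refine le_minEig_of_forall_le_dotProduct_mulVec (neg_nonpos.mpr goldenRatio_pos.le) fun v => ?_
  rw [Q.dotProduct_M_mulVec hpq, Q.dotProduct_self_eq]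
  exact neg_goldenRatio_mul_le_clique_add_matching (Q.matching_injective hpq) _ _

/-- For nonnegative integers `p, q, r` with `p + q ≤ r` and `r ≥ 1`,
the smallest eigenvalue of the signed adjacency matrix of `Q_{p,q,r}` is at least
`−τ`, where `τ = (1+√5)/2`. -/
theorem statement9 (p q r : ℕ) (hpq : p + q ≤ r) (hr : 1 ≤ r) :
    minEig (Q p q r).M ≥ -((1 + Real.sqrt 5) / 2) :=
  statement9_general p q r hpq
end
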